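/- arXiv:1005.4011 — 4 statements merged into one kernel-verified Lean document; each statement's English description precedes it below -/
import Mathlib

section
/- If φ(u) = bu + ∫₀^∞ (1 - e^{-ur}) f(r) dr + q with b, q ≥ 0 and f : (0,∞) → [0,∞) measurable, differentiable and decreasing with ∫₀^∞ min(1,r) f(r) dr < ∞, then for all u ≥ 0, u·φ(u+1) = b u² + φ(1) u + ∫₀^∞ (e^{-ur} - 1 + ur) e^{-r} (f(r) - f'(r)) dr. -/
set_option maxHeartbeats 1000000

open MeasureTheory Real Set Filter Topology

namespace Stmt0Aux

lemma aux1 (x : ℝ) : 1 - exp (-x) ≤ x := by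
  have := add_one_le_exp (-x); linarith

lemma aux2 (x : ℝ) (hx : 0 ≤ x) : 0 ≤ exp (-x) - 1 + x := by
  have := add_one_le_exp (-x); linarith

lemma aux3 (x : ℝ) (hx : 0 ≤ x) : exp (-x) - 1 + x ≤ x := by
  have : exp (-x) ≤ 1 := by rw [exp_le_one_iff]; linarith
  linarith

lemma auxF (y : ℝ) : HasDerivAt (fun x : ℝ => x^2/2 - x + 1 - exp (-x)) (y - 1 + exp (-y)) y := by
  have h1 : HasDerivAt (fun x : ℝ => -x) (-1) y := (hasDerivAt_id y).neg
  have h2 := h1.exp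
  have h3 := (hasDerivAt_pow 2 y).div_const 2
  have := ((h3.sub (hasDerivAt_id y)).add_const 1).sub h2
  refine this.congr_deriv ?_
  norm_num

lemma aux4 (x : ℝ) (hx : 0 ≤ x) : exp (-x) - 1 + x ≤ x^2/2 := by
  have hmono : MonotoneOn (fun x : ℝ => x^2/2 - x + 1 - exp (-x)) (Ici 0) := by
    apply monotoneOn_of_deriv_nonneg (convex_Ici 0)
    · exact Continuous.continuousOn (by continuity)
    · intro y hy
      exact (auxF y).differentiableAt.differentiableWithinAt
    · intro y hy
      rw [(auxF y).deriv]
      have := add_one_le_exp (-y); linarith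
  have h0 := hmono (self_mem_Ici) hx hx
  simp at h0
  linarith

lemma exp_aux (r : ℝ) (hr : 0 ≤ r) : (1 + r) * exp (-r) ≤ 1 := by
  rw [exp_neg, ← div_eq_mul_inv, div_le_one (exp_pos r)]
  linarith [add_one_le_exp r]

lemma exp_aux2 (r : ℝ) (hr : 0 ≤ r) : r * exp (-r) ≤ 1 := by
  rw [exp_neg, ← div_eq_mul_inv, div_le_one (exp_pos r)]
  linarith [add_one_le_exp r]

noncomputable def gg (u r : ℝ) : ℝ := (exp (-u * r) - 1 + u * r) * exp (-r)

noncomputable def gg' (u r : ℝ) : ℝ :=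
  (u - u * exp (-u * r)) * exp (-r) - (exp (-u * r) - 1 + u * r) * exp (-r)

lemma hasDerivAt_gg (u r : ℝ) : HasDerivAt (gg u) (gg' u r) r := by
  unfold gg gg'
  have h1 : HasDerivAt (fun r : ℝ => -u * r) (-u) r := by
    simpa using (hasDerivAt_id r).const_mul (-u)
  have h2 := h1.exp
  have h3 : HasDerivAt (fun r : ℝ => u * r) u r := by
    simpa using (hasDerivAt_id r).const_mul u
  have h4 : HasDerivAt (fun r : ℝ => -r) (-1) r := (hasDerivAt_id r).neg
  have h5 := h4.exp
  have := ((h2.sub_const 1).add h3).mul h5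
  refine this.congr_deriv ?_
  norm_num
  ring

lemma gg_cont (u : ℝ) : Continuous (gg u) := by
  unfold gg
  exact (((continuous_const.mul continuous_id).rexp.sub continuous_const).add
    (continuous_const.mul continuous_id)).mul (continuous_neg.rexp)

lemma gg'_cont (u : ℝ) : Continuous (gg' u) := by
  unfold gg'
  exact ((continuous_const.sub
      (continuous_const.mul (continuous_const.mul continuous_id).rexp)).mul
        (continuous_neg.rexp)).sub
    ((((continuous_const.mul continuous_id).rexp.sub continuous_const).add
      (continuous_const.mul continuous_id)).mul (continuous_neg.rexp))

lemma gg_nonneg (u r : ℝ) (hu : 0 ≤ u) (hr : 0 ≤ r) : 0 ≤ gg u r := by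
  unfold gg
  rw [neg_mul]
  exact mul_nonneg (aux2 (u * r) (mul_nonneg hu hr)) (exp_pos _).le

lemma gg_le (u r : ℝ) (hu : 0 ≤ u) (hr : 0 ≤ r) : gg u r ≤ u * min 1 r := by
  unfold gg
  rw [neg_mul]
  have hur : 0 ≤ u * r := mul_nonneg hu hr
  have hA := aux3 (u * r) hur
  rcases le_total r 1 with h | h
  · rw [min_eq_right h]
    calc (exp (-(u * r)) - 1 + u * r) * exp (-r) ≤ (u * r) * 1 :=
          mul_le_mul hA (exp_le_one_iff.mpr (by linarith)) (exp_pos _).le hur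
      _ = u * r := by ring
  · rw [min_eq_left h]
    calc (exp (-(u * r)) - 1 + u * r) * exp (-r) ≤ (u * r) * exp (-r) :=
          mul_le_mul_of_nonneg_right hA (exp_pos _).le
      _ = u * (r * exp (-r)) := by ring
      _ ≤ u * 1 := mul_le_mul_of_nonneg_left (exp_aux2 r hr) hu

lemma gg_le_sq (u r : ℝ) (hu : 0 ≤ u) (hr : 0 ≤ r) : gg u r ≤ u^2/2 * r^2 := by
  unfold gg
  rw [neg_mul]
  have hur : 0 ≤ u * r := mul_nonneg hu hr
  calc (exp (-(u * r)) - 1 + u * r) * exp (-r) ≤ ((u*r)^2/2) * 1 :=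
        mul_le_mul (aux4 (u*r) hur) (exp_le_one_iff.mpr (by linarith)) (exp_pos _).le
          (by positivity)
    _ = u^2/2 * r^2 := by ring

lemma gg_le_lin (u r : ℝ) (hu : 0 ≤ u) (hr : 0 ≤ r) : gg u r ≤ u * (r * exp (-r)) := by
  unfold gg
  rw [neg_mul]
  have hur : 0 ≤ u * r := mul_nonneg hu hr
  calc (exp (-(u * r)) - 1 + u * r) * exp (-r) ≤ (u * r) * exp (-r) :=
        mul_le_mul_of_nonneg_right (aux3 (u*r) hur) (exp_pos _).le
    _ = u * (r * exp (-r)) := by ring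

lemma gg'_le (u r : ℝ) (hu : 0 ≤ u) (hr : 0 ≤ r) : |gg' u r| ≤ (2*u^2 + 2*u) * min 1 r := by
  unfold gg'
  rw [neg_mul]
  have hur : 0 ≤ u * r := mul_nonneg hu hr
  have e1 : (0:ℝ) < exp (-r) := exp_pos _
  have h1le : exp (-r) ≤ 1 := exp_le_one_iff.mpr (by linarith)
  have hexple : exp (-(u * r)) ≤ 1 := exp_le_one_iff.mpr (by linarith)
  have hA0 : 0 ≤ 1 - exp (-(u * r)) := by linarith
  have hA1 : 1 - exp (-(u * r)) ≤ u * r := aux1 (u*r)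
  have hA2 : 1 - exp (-(u * r)) ≤ 1 := by linarith [(exp_pos (-(u*r))).le]
  have hB0 := aux2 (u*r) hur
  have hB1 := aux4 (u*r) hur
  have hB2 := aux3 (u*r) hur
  have habs : |(u - u * exp (-(u * r))) * exp (-r) - (exp (-(u * r)) - 1 + u * r) * exp (-r)|
      ≤ (u * (1 - exp (-(u*r))) + (exp (-(u * r)) - 1 + u * r)) * exp (-r) := by
    rw [abs_le]
    constructor
    · nlinarith [mul_nonneg (mul_nonneg hu hA0) e1.le, mul_nonneg hB0 e1.le]
    · nlinarith [mul_nonneg (mul_nonneg hu hA0) e1.le, mul_nonneg hB0 e1.le]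
  refine habs.trans ?_
  rcases le_total r 1 with h | h
  · rw [min_eq_right h]
    calc (u * (1 - exp (-(u*r))) + (exp (-(u * r)) - 1 + u * r)) * exp (-r)
        ≤ (u * (u * r) + (u*r)^2/2) * 1 := by
          apply mul_le_mul _ h1le e1.le _
          · have := mul_le_mul_of_nonneg_left hA1 hu
            linarith
          · nlinarith [mul_nonneg (mul_nonneg hu hA0) hr]
      _ = u^2 * r + u^2 * (r * r) / 2 := by ring
      _ ≤ (2*u^2 + 2*u) * r := by nlinarith
  · rw [min_eq_left h]
    calc (u * (1 - exp (-(u*r))) + (exp (-(u * r)) - 1 + u * r)) * exp (-r)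
        ≤ (u * 1 + u * r) * exp (-r) := by
          apply mul_le_mul_of_nonneg_right _ e1.le
          have := mul_le_mul_of_nonneg_left hA2 hu
          linarith
      _ = u * ((1 + r) * exp (-r)) := by ring
      _ ≤ u * 1 := mul_le_mul_of_nonneg_left (exp_aux r hr) hu
      _ ≤ (2*u^2 + 2*u) * 1 := by nlinarith

lemma mderiv_nonpos {f : ℝ → ℝ} (hf : AntitoneOn f (Ioi 0))
    (hd : ∀ r ∈ Ioi (0:ℝ), DifferentiableAt ℝ f r) {r : ℝ} (hr : r ∈ Ioi (0:ℝ)) :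
    deriv f r ≤ 0 := by
  have hda := (hd r hr).hasDerivAt
  rw [hasDerivAt_iff_tendsto_slope] at hda
  have h2 : Tendsto (slope f r) (𝓝[>] r) (𝓝 (deriv f r)) :=
    hda.mono_left (nhdsWithin_mono _ (fun y hy => ne_of_gt hy))
  refine le_of_tendsto h2 ?_
  filter_upwards [self_mem_nhdsWithin] with y hy
  have hy' : r < y := hy
  have : f y ≤ f r := hf hr (lt_trans hr hy') hy'.le
  rw [slope_def_field]
  apply div_nonpos_of_nonpos_of_nonneg <;> linarith


theorem key (f : ℝ → ℝ)
    (hf_nonneg : ∀ r ∈ Ioi (0:ℝ), 0 ≤ f r)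
    (hf_diff : ∀ r ∈ Ioi (0:ℝ), DifferentiableAt ℝ f r)
    (hf_anti : AntitoneOn f (Ioi 0))
    (hf_int : IntegrableOn (fun r => min 1 r * f r) (Ioi 0))
    (u : ℝ) (hu : 0 ≤ u) :
    (∫ r in Ioi (0:ℝ), gg u r * (f r - deriv f r))
      = u * (∫ r in Ioi (0:ℝ), (1 - exp (-(u+1) * r)) * f r)
        - u * (∫ r in Ioi (0:ℝ), (1 - exp (-1 * r)) * f r) := by
  -- measurability of f
  have h_measf : AEStronglyMeasurable f (volume.restrict (Ioi 0)) := by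
    have hm : AEStronglyMeasurable (fun r => (min 1 r)⁻¹ * (min 1 r * f r))
        (volume.restrict (Ioi 0)) :=
      ((measurable_const.min measurable_id).inv.aestronglyMeasurable).mul hf_int.1
    apply hm.congr
    filter_upwards [ae_restrict_mem measurableSet_Ioi] with r hr
    have : min 1 r ≠ 0 := ne_of_gt (lt_min one_pos hr)
    field_simp
  have h_measdf : AEStronglyMeasurable (deriv f) (volume.restrict (Ioi 0)) :=
    (measurable_deriv f).aestronglyMeasurable.restrict
  -- generic integrability from bound
  have h_int_of_bound : ∀ (h : ℝ → ℝ) (C : ℝ),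
      AEStronglyMeasurable h (volume.restrict (Ioi 0)) →
      (∀ r ∈ Ioi (0:ℝ), ‖h r‖ ≤ C * (min 1 r * f r)) → IntegrableOn h (Ioi 0) := by
    intro h C hm hb
    apply Integrable.mono' (hf_int.const_mul C) hm
    filter_upwards [ae_restrict_mem measurableSet_Ioi] with r hr
    exact hb r hr
  have hmin_nonneg : ∀ r ∈ Ioi (0:ℝ), 0 ≤ min 1 r * f r := fun r hr =>
    mul_nonneg (le_min zero_le_one (le_of_lt hr)) (hf_nonneg r hr)
  -- integrability of (1 - exp(-w r)) f
  have h_fI : ∀ w, 0 ≤ w → IntegrableOn (fun r => (1 - exp (-w * r)) * f r) (Ioi 0) := by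
    intro w hw
    apply h_int_of_bound _ (max 1 w)
    · exact ((continuous_const.sub ((continuous_const.mul continuous_id).rexp)).aestronglyMeasurable.restrict).mul h_measf
    · intro r hr
      have hr0 : (0:ℝ) < r := hr
      have hf0 := hf_nonneg r hr
      have hexp : exp (-w * r) ≤ 1 := by
        rw [exp_le_one_iff, neg_mul]
        simp [mul_nonneg hw hr0.le]
      have h1 : 0 ≤ 1 - exp (-w * r) := by linarith
      have h2 : 1 - exp (-w * r) ≤ max 1 w * min 1 r := by
        rcases le_total r 1 with h | h
        · rw [min_eq_right h]
          have haux : 1 - exp (-(w * r)) ≤ w * r := by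
            have := add_one_le_exp (-(w*r)); linarith
          rw [neg_mul]
          calc 1 - exp (-(w*r)) ≤ w * r := haux
            _ ≤ max 1 w * r := mul_le_mul_of_nonneg_right (le_max_right 1 w) hr0.le
        · rw [min_eq_left h]
          calc 1 - exp (-w * r) ≤ 1 := by linarith [(exp_pos (-w*r)).le]
            _ = 1 * 1 := by ring
            _ ≤ max 1 w * 1 := by
                apply mul_le_mul_of_nonneg_right (le_max_left 1 w) zero_le_one
      rw [norm_mul, Real.norm_eq_abs, Real.norm_eq_abs, abs_of_nonneg h1, abs_of_nonneg hf0]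
      calc (1 - exp (-w * r)) * f r ≤ (max 1 w * min 1 r) * f r :=
            mul_le_mul_of_nonneg_right h2 hf0
        _ = max 1 w * (min 1 r * f r) := by ring
  -- integrability of gg * f and gg' * f
  have h_gf_int : IntegrableOn (fun r => gg u r * f r) (Ioi 0) := by
    apply h_int_of_bound _ u
    · exact (gg_cont u).aestronglyMeasurable.restrict.mul h_measf
    · intro r hr
      have hr0 : (0:ℝ) < r := hr
      have hf0 := hf_nonneg r hr
      rw [norm_mul, Real.norm_eq_abs, Real.norm_eq_abs,
        abs_of_nonneg (gg_nonneg u r hu hr0.le), abs_of_nonneg hf0]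
      calc gg u r * f r ≤ (u * min 1 r) * f r :=
            mul_le_mul_of_nonneg_right (gg_le u r hu hr0.le) hf0
        _ = u * (min 1 r * f r) := by ring
  have h_g'f_int : IntegrableOn (fun r => gg' u r * f r) (Ioi 0) := by
    apply h_int_of_bound _ (2*u^2 + 2*u)
    · exact (gg'_cont u).aestronglyMeasurable.restrict.mul h_measf
    · intro r hr
      have hr0 : (0:ℝ) < r := hr
      have hf0 := hf_nonneg r hr
      rw [norm_mul, Real.norm_eq_abs, Real.norm_eq_abs, abs_of_nonneg hf0]
      calc |gg' u r| * f r ≤ ((2*u^2 + 2*u) * min 1 r) * f r :=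
            mul_le_mul_of_nonneg_right (gg'_le u r hu hr0.le) hf0
        _ = (2*u^2 + 2*u) * (min 1 r * f r) := by ring

  -- basic set integral facts
  have hC0 : (0:ℝ) ≤ ∫ r in Ioi (0:ℝ), min 1 r * f r :=
    setIntegral_nonneg measurableSet_Ioi hmin_nonneg
  have h_nonneg_ae : 0 ≤ᵐ[volume.restrict (Ioi (0:ℝ))] fun r => min 1 r * f r := by
    filter_upwards [ae_restrict_mem measurableSet_Ioi] with r hr
    exact hmin_nonneg r hr
  have hH_le : ∀ s : ℝ, 0 < s →
      (∫ r in Ioc (0:ℝ) s, min 1 r * f r) ≤ ∫ r in Ioi (0:ℝ), min 1 r * f r := by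
    intro s hs
    exact setIntegral_mono_set hf_int h_nonneg_ae (HasSubset.Subset.eventuallyLE Ioc_subset_Ioi_self)
  have h_r2f : ∀ s : ℝ, s ∈ Ioc (0:ℝ) 1 →
      s^2 * f s ≤ 4 * ∫ r in Ioc (0:ℝ) s, min 1 r * f r := by
    intro s hs
    obtain ⟨hs0, hs1⟩ := hs
    have hsub : Ioc (s/2) s ⊆ Ioi (0:ℝ) := fun x hx => lt_trans (by linarith) hx.1
    have hsub2 : Ioc (s/2) s ⊆ Ioc (0:ℝ) s := fun x hx => ⟨lt_trans (by linarith) hx.1, hx.2⟩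
    have hint2 : IntegrableOn (fun r => min 1 r * f r) (Ioc (s/2) s) := hf_int.mono_set hsub
    have hint3 : IntegrableOn (fun r => min 1 r * f r) (Ioc (0:ℝ) s) :=
      hf_int.mono_set Ioc_subset_Ioi_self
    have hconst : ∀ x ∈ Ioc (s/2) s, s/2 * f s ≤ min 1 x * f x := by
      intro x hx
      have hx0 : (0:ℝ) < x := lt_trans (by linarith) hx.1
      have hfx : f s ≤ f x := hf_anti (mem_Ioi.mpr hx0) (mem_Ioi.mpr hs0) hx.2
      have hmin : s/2 ≤ min 1 x := le_min (by linarith) (by linarith [hx.1])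
      exact mul_le_mul hmin hfx (hf_nonneg s (mem_Ioi.mpr hs0))
        (le_min zero_le_one hx0.le)
    have hge := setIntegral_ge_of_const_le measurableSet_Ioc
      (by exact (measure_Ioc_lt_top).ne) hconst hint2
    have hvol : (volume (Ioc (s/2) s)).toReal = s/2 := by
      rw [Real.volume_Ioc, ENNReal.toReal_ofReal (by linarith)]
      ring
    rw [measureReal_def, hvol, smul_eq_mul] at hge
    have hmono2 : (∫ r in Ioc (s/2) s, min 1 r * f r) ≤ ∫ r in Ioc (0:ℝ) s, min 1 r * f r := by
      apply setIntegral_mono_set hint3 _ (HasSubset.Subset.eventuallyLE hsub2)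
      filter_upwards [ae_restrict_mem measurableSet_Ioc] with r hr
      exact hmin_nonneg r (Ioc_subset_Ioi_self hr)
    nlinarith [hf_nonneg s (mem_Ioi.mpr hs0)]
  have hM : ∀ s : ℝ, s ∈ Ioc (0:ℝ) 1 →
      gg u s * f s ≤ 2*u^2 * ∫ r in Ioc (0:ℝ) s, min 1 r * f r := by
    intro s hs
    have hf0 := hf_nonneg s (mem_Ioi.mpr hs.1)
    calc gg u s * f s ≤ (u^2/2 * s^2) * f s :=
          mul_le_mul_of_nonneg_right (gg_le_sq u s hu hs.1.le) hf0
      _ = u^2/2 * (s^2 * f s) := by ring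
      _ ≤ u^2/2 * (4 * ∫ r in Ioc (0:ℝ) s, min 1 r * f r) :=
          mul_le_mul_of_nonneg_left (h_r2f s hs) (by positivity)
      _ = 2*u^2 * ∫ r in Ioc (0:ℝ) s, min 1 r * f r := by ring
  -- limit at 0+
  have hHtend : Tendsto (fun s : ℝ => ∫ r in Ioc (0:ℝ) s, min 1 r * f r)
      (𝓝[>] (0:ℝ)) (𝓝 0) := by
    have hres : ∀ s : ℝ, (∫ r in Ioc (0:ℝ) s, min 1 r * f r)
        = ∫ r in Ioc (0:ℝ) s, min 1 r * f r ∂(volume.restrict (Ioi (0:ℝ))) := by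
      intro s
      rw [Measure.restrict_restrict measurableSet_Ioc,
        inter_eq_self_of_subset_left Ioc_subset_Ioi_self]
    simp only [hres]
    apply Integrable.tendsto_setIntegral_nhds_zero hf_int
    have hvol : ∀ s : ℝ, (volume.restrict (Ioi (0:ℝ))) (Ioc (0:ℝ) s) = ENNReal.ofReal s := by
      intro s
      rw [Measure.restrict_apply measurableSet_Ioc,
        inter_eq_self_of_subset_left Ioc_subset_Ioi_self, Real.volume_Ioc, sub_zero]
    have : Tendsto (fun s : ℝ => ENNReal.ofReal s) (𝓝[>] (0:ℝ)) (𝓝 0) := by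
      have h0 : Tendsto (fun s : ℝ => s) (𝓝[>] (0:ℝ)) (𝓝 0) :=
        tendsto_id.mono_left nhdsWithin_le_nhds
      simpa [Function.comp_def] using (ENNReal.continuous_ofReal.tendsto 0).comp h0
    exact Tendsto.congr (fun s => (hvol s).symm) this
  have h_zero : Tendsto (fun r => gg u r * f r) (𝓝[>] (0:ℝ)) (𝓝 0) := by
    have hHt2 : Tendsto (fun s : ℝ => 2*u^2 * ∫ r in Ioc (0:ℝ) s, min 1 r * f r)
        (𝓝[>] (0:ℝ)) (𝓝 0) := by simpa using hHtend.const_mul (2*u^2)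
    apply tendsto_of_tendsto_of_tendsto_of_le_of_le' tendsto_const_nhds hHt2
    · filter_upwards [self_mem_nhdsWithin] with r hr
      exact mul_nonneg (gg_nonneg u r hu (le_of_lt hr)) (hf_nonneg r hr)
    · filter_upwards [Ioc_mem_nhdsGT_of_mem (Set.mem_Ico.mpr ⟨le_refl 0, zero_lt_one⟩)] with r hr
      exact hM r hr
  -- limit at infinity
  have h_top : Tendsto (fun r => gg u r * f r) atTop (𝓝 0) := by
    have hlim : Tendsto (fun r : ℝ => u * (r * exp (-r)) * f 1) atTop (𝓝 0) := by
      have h1 := tendsto_pow_mul_exp_neg_atTop_nhds_zero 1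
      simp only [pow_one] at h1
      simpa using (h1.const_mul u).mul_const (f 1)
    apply tendsto_of_tendsto_of_tendsto_of_le_of_le' tendsto_const_nhds hlim
    · filter_upwards [eventually_gt_atTop 0] with r hr
      exact mul_nonneg (gg_nonneg u r hu hr.le) (hf_nonneg r hr)
    · filter_upwards [eventually_ge_atTop 1] with r hr
      have hr0 : (0:ℝ) < r := lt_of_lt_of_le one_pos hr
      have hf1 : f r ≤ f 1 := hf_anti (mem_Ioi.mpr one_pos) (mem_Ioi.mpr hr0) hr
      calc gg u r * f r ≤ gg u r * f 1 :=
            mul_le_mul_of_nonneg_left hf1 (gg_nonneg u r hu hr0.le)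
        _ ≤ (u * (r * exp (-r))) * f 1 :=
            mul_le_mul_of_nonneg_right (gg_le_lin u r hu hr0.le)
              (hf_nonneg 1 (mem_Ioi.mpr one_pos))
  -- limit of f at infinity
  have h_flim : ∃ L, Tendsto f atTop (𝓝 L) := by
    have hF : Antitone (fun x : ℝ => f (max x 1)) := by
      intro x y hxy
      exact hf_anti (mem_Ioi.mpr (lt_of_lt_of_le one_pos (le_max_right x 1)))
        (mem_Ioi.mpr (lt_of_lt_of_le one_pos (le_max_right y 1)))
        (max_le_max hxy (le_refl 1))
    have hbdd : BddBelow (range fun x : ℝ => f (max x 1)) := by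
      refine ⟨0, ?_⟩
      rintro y ⟨x, rfl⟩
      exact hf_nonneg _ (mem_Ioi.mpr (lt_of_lt_of_le one_pos (le_max_right x 1)))
    refine ⟨_, (tendsto_atTop_ciInf hF hbdd).congr' ?_⟩
    filter_upwards [eventually_ge_atTop 1] with x hx
    rw [max_eq_left hx]
  have h_dfint : ∀ a : ℝ, 0 < a → IntegrableOn (deriv f) (Ioi a) := by
    intro a ha
    obtain ⟨L, hL⟩ := h_flim
    exact integrableOn_Ioi_deriv_of_nonpos
      ((hf_diff a ha).continuousAt.continuousWithinAt)
      (fun x hx => (hf_diff x (lt_trans ha hx)).hasDerivAt)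
      (fun x hx => mderiv_nonpos hf_anti hf_diff (lt_trans ha hx)) hL

  have h_ggbd : ∀ r : ℝ, 0 ≤ r → ‖gg u r‖ ≤ u := by
    intro r hr
    rw [Real.norm_eq_abs, abs_of_nonneg (gg_nonneg u r hu hr)]
    refine (gg_le u r hu hr).trans ?_
    have : min 1 r ≤ 1 := min_le_left 1 r
    nlinarith
  have h_gdf_Ioi1 : IntegrableOn (fun r => gg u r * deriv f r) (Ioi 1) := by
    apply Integrable.mono' (((h_dfint 1 one_pos).norm).const_mul u)
      ((gg_cont u).aestronglyMeasurable.restrict.mul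
        ((measurable_deriv f).aestronglyMeasurable.restrict))
    filter_upwards [ae_restrict_mem measurableSet_Ioi] with r hr
    have hr0 : (0:ℝ) < r := lt_trans one_pos hr
    show ‖gg u r * deriv f r‖ ≤ u * ‖deriv f r‖
    rw [norm_mul]
    exact mul_le_mul_of_nonneg_right (h_ggbd r hr0.le) (norm_nonneg _)
  have h_gdf_Ioc01 : IntegrableOn (fun r => gg u r * deriv f r) (Ioc 0 1) := by
    have ha_pos : ∀ n : ℕ, (0:ℝ) < 1/(n+1) := by
      intro n; positivity
    have ha_le1 : ∀ n : ℕ, (1:ℝ)/(n+1) ≤ 1 := by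
      intro n
      rw [div_le_one (by positivity)]
      have : (0:ℝ) ≤ n := Nat.cast_nonneg n
      linarith
    apply integrableOn_Ioc_of_intervalIntegral_norm_bounded_left
      (I := 2*u^2 * (∫ r in Ioi (0:ℝ), min 1 r * f r) + ∫ r in Ioi (0:ℝ), |gg' u r * f r|)
      (a := fun n : ℕ => 1/(n+1)) (l := atTop)
    · intro n
      apply Integrable.mono'
        ((((h_dfint (1/(n+1)) (ha_pos n)).mono_set Ioc_subset_Ioi_self).norm).const_mul u)
        ((gg_cont u).aestronglyMeasurable.restrict.mul
          ((measurable_deriv f).aestronglyMeasurable.restrict))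
      filter_upwards [ae_restrict_mem measurableSet_Ioc] with r hr
      have hr0 : (0:ℝ) < r := lt_trans (ha_pos n) hr.1
      show ‖gg u r * deriv f r‖ ≤ u * ‖deriv f r‖
      rw [norm_mul]
      exact mul_le_mul_of_nonneg_right (h_ggbd r hr0.le) (norm_nonneg _)
    · exact tendsto_one_div_add_atTop_nhds_zero_nat
    · apply Eventually.of_forall
      intro n
      set s : ℝ := 1/(n+1) with hs_def
      have hs0 : (0:ℝ) < s := ha_pos n
      have hs1 : s ≤ 1 := ha_le1 n
      have hIocsub : Ioc s 1 ⊆ Ioi (0:ℝ) := fun x hx => lt_trans hs0 hx.1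
      have hder_ii : IntervalIntegrable (deriv f) volume s 1 := by
        rw [intervalIntegrable_iff_integrableOn_Ioc_of_le hs1]
        exact (h_dfint s hs0).mono_set Ioc_subset_Ioi_self
      have hgg'_ii : IntervalIntegrable (gg' u) volume s 1 :=
        (gg'_cont u).intervalIntegrable s 1
      have hibp := intervalIntegral.integral_mul_deriv_eq_deriv_mul
        (u := gg u) (v := f) (u' := gg' u) (v' := deriv f)
        (fun x _ => hasDerivAt_gg u x)
        (fun x hx => (hf_diff x (by
          rw [uIcc_of_le hs1] at hx
          exact lt_of_lt_of_le hs0 hx.1)).hasDerivAt)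
        hgg'_ii hder_ii
      have heq1 : (∫ x in Ioc s 1, ‖gg u x * deriv f x‖)
          = ∫ x in Ioc s 1, -(gg u x * deriv f x) := by
        apply setIntegral_congr_fun measurableSet_Ioc
        intro x hx
        have hx0 : (0:ℝ) < x := lt_trans hs0 hx.1
        have hneg : gg u x * deriv f x ≤ 0 :=
          mul_nonpos_of_nonneg_of_nonpos (gg_nonneg u x hu hx0.le)
            (mderiv_nonpos hf_anti hf_diff hx0)
        show ‖gg u x * deriv f x‖ = -(gg u x * deriv f x)
        rw [Real.norm_eq_abs, abs_of_nonpos hneg]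
      have heq2 : (∫ x in Ioc s 1, gg u x * deriv f x)
          = ∫ x in s..1, gg u x * deriv f x := (intervalIntegral.integral_of_le hs1).symm
      have h3 : (∫ x in s..1, gg' u x * f x) ≤ ∫ r in Ioi (0:ℝ), |gg' u r * f r| := by
        rw [intervalIntegral.integral_of_le hs1]
        have hint : IntegrableOn (fun x => gg' u x * f x) (Ioc s 1) :=
          h_g'f_int.mono_set hIocsub
        calc (∫ x in Ioc s 1, gg' u x * f x) ≤ ∫ x in Ioc s 1, |gg' u x * f x| :=
              setIntegral_mono hint hint.abs (fun x => le_abs_self _)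
          _ ≤ ∫ r in Ioi (0:ℝ), |gg' u r * f r| := by
              apply setIntegral_mono_set h_g'f_int.abs
                (ae_of_all _ fun x => abs_nonneg _)
                (HasSubset.Subset.eventuallyLE hIocsub)
      have h4 : 0 ≤ gg u 1 * f 1 :=
        mul_nonneg (gg_nonneg u 1 hu zero_le_one) (hf_nonneg 1 (mem_Ioi.mpr one_pos))
      have h5 : gg u s * f s ≤ 2*u^2 * ∫ r in Ioi (0:ℝ), min 1 r * f r :=
        (hM s ⟨hs0, hs1⟩).trans (mul_le_mul_of_nonneg_left (hH_le s hs0) (by positivity))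
      rw [heq1, integral_neg, heq2, hibp]
      linarith
  have h_gdf_int : IntegrableOn (fun r => gg u r * deriv f r) (Ioi 0) := by
    have := h_gdf_Ioc01.union h_gdf_Ioi1
    rwa [Ioc_union_Ioi_eq_Ioi zero_le_one] at this
  -- integration by parts on (0, ∞)
  have h_ibp : (∫ r in Ioi (0:ℝ), gg' u r * f r) + (∫ r in Ioi (0:ℝ), gg u r * deriv f r)
      = 0 := by
    have h := integral_Ioi_deriv_mul_eq_sub (u := gg u) (v := f) (u' := gg' u)
      (v' := deriv f) (fun x _ => hasDerivAt_gg u x)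
      (fun x hx => (hf_diff x hx).hasDerivAt)
      (h_g'f_int.add h_gdf_int) h_zero h_top
    rw [← integral_add h_g'f_int h_gdf_int]
    simpa using h
  -- final computation
  have hsplit : (∫ r in Ioi (0:ℝ), gg u r * (f r - deriv f r))
      = (∫ r in Ioi (0:ℝ), gg u r * f r) - ∫ r in Ioi (0:ℝ), gg u r * deriv f r := by
    rw [← integral_sub h_gf_int h_gdf_int]
    congr 1
    funext r
    ring
  have hcomb : (∫ r in Ioi (0:ℝ), gg u r * f r) + (∫ r in Ioi (0:ℝ), gg' u r * f r)
      = u * (∫ r in Ioi (0:ℝ), (1 - exp (-(u+1) * r)) * f r)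
        - u * (∫ r in Ioi (0:ℝ), (1 - exp (-1 * r)) * f r) := by
    rw [← integral_add h_gf_int h_g'f_int]
    have hpt : ∀ r : ℝ, gg u r * f r + gg' u r * f r
        = u * ((1 - exp (-(u+1) * r)) * f r) - u * ((1 - exp (-1 * r)) * f r) := by
      intro r
      have hsplit_exp : exp (-(u+1) * r) = exp (-u * r) * exp (-r) := by
        rw [← exp_add]
        ring_nf
      have h1 : exp (-1 * r) = exp (-r) := by norm_num
      simp only [gg, gg', hsplit_exp, h1]
      ring
    simp only [hpt]
    rw [integral_sub ((h_fI (u+1) (by linarith)).const_mul u)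
      ((h_fI 1 zero_le_one).const_mul u), integral_const_mul, integral_const_mul]
  rw [hsplit]
  linarith

end Stmt0Aux

open Stmt0Aux

/-- If `φ(u) = b u + ∫₀^∞ (1 - e^{-u r}) f(r) dr + q` with `b, q ≥ 0` and `f` a nonnegative,
differentiable, decreasing Lévy density with `∫₀^∞ min(1,r) f(r) dr < ∞`, then
`u·φ(u+1) = b u² + φ(1) u + ∫₀^∞ (e^{-ur} - 1 + ur) e^{-r} (f(r) - f'(r))`. -/
theorem stmt0 (b q : ℝ) (hb : 0 ≤ b) (hq : 0 ≤ q) (f : ℝ → ℝ)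
    (hf_nonneg : ∀ r ∈ Ioi (0:ℝ), 0 ≤ f r)
    (hf_diff : ∀ r ∈ Ioi (0:ℝ), DifferentiableAt ℝ f r)
    (hf_anti : AntitoneOn f (Ioi 0))
    (hf_int : IntegrableOn (fun r => min 1 r * f r) (Ioi 0))
    (φ : ℝ → ℝ)
    (hφ : ∀ u, 0 ≤ u → φ u = b * u + (∫ r in Ioi (0:ℝ), (1 - exp (-u * r)) * f r) + q) :
    ∀ u, 0 ≤ u →
      u * φ (u + 1) =
        b * u ^ 2 + φ 1 * u +
          ∫ r in Ioi (0:ℝ), (exp (-u * r) - 1 + u * r) * exp (-r) * (f r - deriv f r) := by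
  intro u hu
  have hkey := Stmt0Aux.key f hf_nonneg hf_diff hf_anti hf_int u hu
  simp only [gg] at hkey
  rw [hφ (u+1) (by linarith), hφ 1 zero_le_one, hkey]
  ring
end

section
/- Let f : (0,∞) → [0,∞) be differentiable, decreasing, with ∫₀^∞ min(1,r) f(r) dr < ∞. Then the measure Π(dr) on (0,∞) with density e^{-r}(f(r) - f'(r)) satisfies ∫₀^∞ min(r, r²) Π(dr) < ∞. -/
/-!
The weight `min(r, r²) e^{-r}` is at most `min(1, r)` and at most `min(1, r²)`, so the `f`-part is
dominated by the hypothesis and it remains to show `∫ min(1, r²) (-f'(r)) dr < ∞`. On `(1, ∞)`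
this integral is at most `f(1) - inf f ≤ f(1)`. On `(0, 1]`, the function
`G(x) = 2 ∫₀ˣ t f(t) dt - x² f(x)` has derivative `x² (-f'(x)) ≥ 0` and is nonnegative, because
`x² f(x) = 2 ∫₀ˣ t f(x) dt ≤ 2 ∫₀ˣ t f(t) dt`; hence `∫ₐ¹ r² (-f'(r)) dr = G(1) - G(a) ≤ G(1)`
uniformly in `a > 0`.
-/

open MeasureTheory Real Set Filter Topology

theorem AntitoneOn.deriv_nonpos_of_mem_nhds {f : ℝ → ℝ} {s : Set ℝ} {x : ℝ}
    (hf : AntitoneOn f s) (hs : s ∈ 𝓝 x) : deriv f x ≤ 0 := by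
  rw [← derivWithin_of_mem_nhds hs]
  exact hf.derivWithin_nonpos

theorem MeasureTheory.IntegrableOn.of_nonneg_of_le {α : Type*} [MeasurableSpace α]
    {μ : Measure α} {f g : α → ℝ} {s : Set α} (hg : IntegrableOn g s μ) (hs : MeasurableSet s)
    (hf : AEStronglyMeasurable f (μ.restrict s)) (h0 : ∀ x ∈ s, 0 ≤ f x)
    (hle : ∀ x ∈ s, f x ≤ g x) : IntegrableOn f s μ :=
  hg.mono_nonneg hf ((ae_restrict_iff' hs).2 (.of_forall h0))
    ((ae_restrict_iff' hs).2 (.of_forall hle))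

theorem integrableOn_Ioc_deriv_of_nonneg {g g' : ℝ → ℝ} {a b : ℝ}
    (hderiv : ∀ x ∈ Icc a b, HasDerivAt g (g' x) x) (hg' : ∀ x ∈ Ioc a b, 0 ≤ g' x) :
    IntegrableOn g' (Ioc a b) :=
  intervalIntegral.integrableOn_deriv_of_nonneg
    (fun x hx => (hderiv x hx).continuousAt.continuousWithinAt)
    (fun x hx => hderiv x (Ioo_subset_Icc_self hx)) (fun x hx => hg' x (Ioo_subset_Ioc_self hx))

theorem integral_Ioc_norm_deriv_of_nonneg {g g' : ℝ → ℝ} {a b : ℝ} (hab : a ≤ b)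
    (hderiv : ∀ x ∈ Icc a b, HasDerivAt g (g' x) x) (hg' : ∀ x ∈ Ioc a b, 0 ≤ g' x) :
    ∫ x in Ioc a b, ‖g' x‖ = g b - g a := by
  rw [setIntegral_congr_fun measurableSet_Ioc (fun x hx => Real.norm_of_nonneg (hg' x hx)),
    ← intervalIntegral.integral_of_le hab]
  refine intervalIntegral.integral_eq_sub_of_hasDerivAt (fun x hx => hderiv x ?_) ?_
  · rwa [uIcc_of_le hab] at hx
  · exact (intervalIntegrable_iff_integrableOn_Ioc_of_le hab).2
      (integrableOn_Ioc_deriv_of_nonneg hderiv hg')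

theorem integrableOn_Ioi_deriv_of_nonneg_of_le {g g' : ℝ → ℝ} {a C : ℝ}
    (hderiv : ∀ x ∈ Ici a, HasDerivAt g (g' x) x) (hg' : ∀ x ∈ Ioi a, 0 ≤ g' x)
    (hC : ∀ x ∈ Ioi a, g x ≤ C) : IntegrableOn g' (Ioi a) := by
  have hderiv' : ∀ b, ∀ x ∈ Icc a b, HasDerivAt g (g' x) x := fun b x hx => hderiv x hx.1
  refine integrableOn_Ioi_of_intervalIntegral_norm_bounded (C - g a) a (b := id)
    (fun b => integrableOn_Ioc_deriv_of_nonneg (hderiv' b) fun x hx => hg' x hx.1) tendsto_id ?_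
  filter_upwards [eventually_gt_atTop a] with b hb
  rw [id, intervalIntegral.integral_of_le hb.le,
    integral_Ioc_norm_deriv_of_nonneg hb.le (hderiv' b) fun x hx => hg' x hx.1]
  linarith [hC b hb]

theorem integrableOn_Ioc_deriv_of_nonneg_of_le {g g' : ℝ → ℝ} {a b C : ℝ}
    (hderiv : ∀ x ∈ Ioc a b, HasDerivAt g (g' x) x) (hg' : ∀ x ∈ Ioc a b, 0 ≤ g' x)
    (hC : ∀ x ∈ Ioc a b, C ≤ g x) : IntegrableOn g' (Ioc a b) := by
  rcases le_or_gt b a with hba | hab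
  · simp [Ioc_eq_empty_of_le hba]
  set c : ℕ → ℝ := fun n => a + (b - a) / (n + 1)
  have hc : ∀ n, c n ∈ Ioc a b := fun n => by
    have : (b - a) / (n + 1) ≤ b - a := div_le_self (by linarith) (by simp)
    exact ⟨lt_add_of_pos_right a (by positivity), by simp only [c]; linarith⟩
  have hderiv' : ∀ n, ∀ x ∈ Icc (c n) b, HasDerivAt g (g' x) x := fun n x hx =>
    hderiv x ⟨(hc n).1.trans_le hx.1, hx.2⟩
  have hg'' : ∀ n, ∀ x ∈ Ioc (c n) b, 0 ≤ g' x := fun n x hx =>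
    hg' x ⟨(hc n).1.trans hx.1, hx.2⟩
  refine integrableOn_Ioc_of_intervalIntegral_norm_bounded_left (l := atTop) (I := g b - C)
    (fun n => integrableOn_Ioc_deriv_of_nonneg (hderiv' n) (hg'' n)) ?_ (.of_forall fun n => ?_)
  · simpa [c] using ((tendsto_const_div_atTop_nhds_zero_nat (b - a)).comp
      (tendsto_add_atTop_nat 1)).const_add a
  · rw [integral_Ioc_norm_deriv_of_nonneg (hc n).2 (hderiv' n) (hg'' n)]
    linarith [hC (c n) (hc n)]

theorem sq_mul_le_two_mul_integral_mul_of_antitoneOn {f : ℝ → ℝ} {x : ℝ} (hx : 0 ≤ x)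
    (hf : AntitoneOn f (Ioc 0 x)) (hint : IntervalIntegrable (fun t => t * f t) volume 0 x) :
    x ^ 2 * f x ≤ 2 * ∫ t in (0:ℝ)..x, t * f t := by
  have hmono : ∫ t in (0:ℝ)..x, t * f x ≤ ∫ t in (0:ℝ)..x, t * f t := by
    refine intervalIntegral.integral_mono_on hx
      (Continuous.intervalIntegrable (by fun_prop) _ _) hint fun t ht => ?_
    rcases ht.1.eq_or_lt with rfl | ht0
    · simp
    · exact mul_le_mul_of_nonneg_left (hf ⟨ht0, ht.2⟩ ⟨ht0.trans_le ht.2, le_rfl⟩ ht.2) ht0.le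
  rw [intervalIntegral.integral_mul_const, integral_id] at hmono
  linarith

theorem integrableOn_Ioc_zero_sq_mul_neg_deriv {f : ℝ → ℝ} {b : ℝ}
    (hf_diff : ∀ r ∈ Ioi (0:ℝ), DifferentiableAt ℝ f r) (hf_anti : AntitoneOn f (Ioi 0))
    (hf_int : IntegrableOn (fun t => t * f t) (Ioc 0 b)) :
    IntegrableOn (fun r => r ^ 2 * -deriv f r) (Ioc 0 b) := by
  have hint : ∀ x ∈ Ioc (0:ℝ) b, IntervalIntegrable (fun t => t * f t) volume 0 x := fun x hx =>
    (intervalIntegrable_iff_integrableOn_Ioc_of_le hx.1.le).2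
      (hf_int.mono_set (Ioc_subset_Ioc_right hx.2))
  have hcont : ContinuousOn (fun t => t * f t) (Ioi 0) :=
    continuousOn_id.mul fun r hr => (hf_diff r hr).continuousAt.continuousWithinAt
  refine integrableOn_Ioc_deriv_of_nonneg_of_le
    (g := fun x => (2 * ∫ t in (0:ℝ)..x, t * f t) - x ^ 2 * f x) (C := 0) (fun x hx => ?_)
    (fun x hx => ?_) (fun x hx => ?_)
  · have hF := intervalIntegral.integral_hasDerivAt_right (hint x hx)
      (hcont.stronglyMeasurableAtFilter isOpen_Ioi x hx.1)
      (hcont.continuousAt (isOpen_Ioi.mem_nhds hx.1))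
    refine ((hF.const_mul 2).sub
      ((hasDerivAt_pow 2 x).mul (hf_diff x hx.1).hasDerivAt)).congr_deriv ?_
    push_cast
    ring
  · exact mul_nonneg (sq_nonneg x)
      (neg_nonneg.2 (hf_anti.deriv_nonpos_of_mem_nhds (isOpen_Ioi.mem_nhds hx.1)))
  · exact sub_nonneg.2 (sq_mul_le_two_mul_integral_mul_of_antitoneOn hx.1.le
      (hf_anti.mono Ioc_subset_Ioi_self) (hint x hx))

theorem AntitoneOn.integrableOn_Ioi_deriv {f : ℝ → ℝ} {a C : ℝ}
    (hf_diff : ∀ x ∈ Ici a, DifferentiableAt ℝ f x) (hf_anti : AntitoneOn f (Ici a))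
    (hC : ∀ x ∈ Ioi a, C ≤ f x) : IntegrableOn (deriv f) (Ioi a) := by
  have h := integrableOn_Ioi_deriv_of_nonneg_of_le (g := -f) (C := -C)
    (fun x hx => (hf_diff x hx).hasDerivAt.neg)
    (fun x hx => neg_nonneg.2 (hf_anti.deriv_nonpos_of_mem_nhds (Ici_mem_nhds hx)))
    (fun x hx => neg_le_neg (hC x hx))
  simpa using h.neg

theorem min_mul_exp_neg_le_min_one {r : ℝ} (hr : 0 ≤ r) :
    min r (r ^ 2) * exp (-r) ≤ min 1 r := by
  rcases le_total r 1 with h | h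
  · rw [min_eq_right h]
    calc min r (r ^ 2) * exp (-r) ≤ r * 1 :=
          mul_le_mul (min_le_left _ _) (exp_le_one_iff.2 (by linarith)) (exp_pos _).le hr
      _ = r := mul_one r
  · rw [min_eq_left h, exp_neg, ← div_eq_mul_inv]
    calc min r (r ^ 2) / exp r ≤ r / exp r := by gcongr; exact min_le_left _ _
      _ ≤ 1 := div_le_one_of_le₀ (by linarith [add_one_le_exp r]) (exp_pos r).le

theorem min_mul_exp_neg_le_min_one_sq {r : ℝ} (hr : 0 ≤ r) :
    min r (r ^ 2) * exp (-r) ≤ min 1 (r ^ 2) := by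
  refine le_min ((min_mul_exp_neg_le_min_one hr).trans (min_le_left 1 r)) ?_
  calc min r (r ^ 2) * exp (-r) ≤ r ^ 2 * 1 :=
        mul_le_mul (min_le_right _ _) (exp_le_one_iff.2 (by linarith)) (exp_pos _).le (sq_nonneg r)
    _ = r ^ 2 := mul_one _

theorem integrableOn_min_one_sq_mul_neg_deriv {f : ℝ → ℝ}
    (hf_nonneg : ∀ r ∈ Ioi (0:ℝ), 0 ≤ f r) (hf_diff : ∀ r ∈ Ioi (0:ℝ), DifferentiableAt ℝ f r)
    (hf_anti : AntitoneOn f (Ioi 0)) (hf_int : IntegrableOn (fun t => t * f t) (Ioc 0 1)) :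
    IntegrableOn (fun r => min 1 (r ^ 2) * -deriv f r) (Ioi 0) := by
  have h1 : Ici (1:ℝ) ⊆ Ioi 0 := Ici_subset_Ioi.2 one_pos
  have h_small := integrableOn_Ioc_zero_sq_mul_neg_deriv hf_diff hf_anti hf_int
  have h_tail := (hf_anti.mono h1).integrableOn_Ioi_deriv (fun r hr => hf_diff r (h1 hr))
    (fun r hr => hf_nonneg r (h1 (mem_Ici.2 (le_of_lt hr)))) |>.neg
  rw [← Ioc_union_Ioi_eq_Ioi zero_le_one]
  refine (h_small.congr_fun (fun r hr => ?_) measurableSet_Ioc).union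
    (h_tail.congr_fun (fun r hr => ?_) measurableSet_Ioi)
  · simp only [min_eq_right (pow_le_one₀ hr.1.le hr.2)]
  · simp only [Pi.neg_apply, min_eq_left (one_le_pow₀ (mem_Ioi.1 hr).le), one_mul]

/-- If `f : (0,∞) → [0,∞)` is differentiable, decreasing and satisfies
`∫₀^∞ min(1,r) f(r) dr < ∞`, then the measure with density `e^{-r}(f(r) - f'(r))` on `(0,∞)`
integrates `min(r, r²)`. -/
theorem stmt1 (f : ℝ → ℝ)
    (hf_nonneg : ∀ r ∈ Ioi (0:ℝ), 0 ≤ f r)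
    (hf_diff : ∀ r ∈ Ioi (0:ℝ), DifferentiableAt ℝ f r)
    (hf_anti : AntitoneOn f (Ioi 0))
    (hf_int : IntegrableOn (fun r => min 1 r * f r) (Ioi 0)) :
    IntegrableOn (fun r => min r (r ^ 2) * (exp (-r) * (f r - deriv f r))) (Ioi 0) := by
  set w : ℝ → ℝ := fun r => min r (r ^ 2) * exp (-r)
  have hw : Continuous w := by fun_prop
  have hw_nonneg : ∀ r ∈ Ioi (0:ℝ), 0 ≤ w r := fun r hr =>
    mul_nonneg (le_min (le_of_lt hr) (sq_nonneg r)) (exp_pos _).le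
  have hf' : ∀ r ∈ Ioi (0:ℝ), 0 ≤ -deriv f r := fun r hr =>
    neg_nonneg.2 (hf_anti.deriv_nonpos_of_mem_nhds (isOpen_Ioi.mem_nhds hr))
  have h_f : IntegrableOn (fun r => w r * f r) (Ioi 0) :=
    hf_int.of_nonneg_of_le measurableSet_Ioi ((hw.continuousOn.mul fun r hr =>
        (hf_diff r hr).continuousAt.continuousWithinAt).aestronglyMeasurable measurableSet_Ioi)
      (fun r hr => mul_nonneg (hw_nonneg r hr) (hf_nonneg r hr))
      (fun r hr => mul_le_mul_of_nonneg_right (min_mul_exp_neg_le_min_one hr.le) (hf_nonneg r hr))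
  have hf_int' : IntegrableOn (fun t => t * f t) (Ioc 0 1) :=
    (hf_int.mono_set Ioc_subset_Ioi_self).congr_fun
      (fun r hr => by simp only [min_eq_right hr.2]) measurableSet_Ioc
  have h_deriv : IntegrableOn (fun r => w r * -deriv f r) (Ioi 0) :=
    (integrableOn_min_one_sq_mul_neg_deriv hf_nonneg hf_diff hf_anti hf_int').of_nonneg_of_le
      measurableSet_Ioi (hw.measurable.mul (measurable_deriv f).neg).aestronglyMeasurable
      (fun r hr => mul_nonneg (hw_nonneg r hr) (hf' r hr))
      (fun r hr => mul_le_mul_of_nonneg_right (min_mul_exp_neg_le_min_one_sq hr.le) (hf' r hr))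
  exact (h_f.add h_deriv).congr_fun (fun r _ => by simp only [w, Pi.add_apply]; ring)
    measurableSet_Ioi
end

section
/- Let ψ(u) = σu² + mu + ∫_{-∞}^0 (e^{ur} - 1 - ur) Π(dr) with σ ≥ 0, m ≥ 0, and Π a measure on (-∞,0) with ∫_{-∞}^0 min(|r|, r²) Π(dr) < ∞. Define f(r) = Π((-∞, r)) for r < 0. Then for all u ≥ 0: (u/(u+1))·ψ(u+1) = σu² + ψ(1)u + ∫_{-∞}^0 (e^{ur} - 1 - ur) e^{r} (f(r) dr + Π(dr)). -/
/-!
Write `φ_u(r) = e^{ur} - 1 - ur`. By Tonelli, for `h ≥ 0` the tail term satisfies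
`∫_{r<0} h(r) Π(-∞, r) dr = ∫_{s<0} (∫_s^0 h) Π(ds)`, and for `h(r) = φ_u(r) e^r` the inner integral
has the closed form `(u+1) ∫_s^0 h = u φ_{u+1}(s) - u(u+1) φ_1(s) - (u+1) φ_u(s) e^s`.
Integrating against `Π` gives a linear relation between `ψ(u+1)`, `ψ(1)` and the two integrals of
the claim; the `σ` and `m` terms balance algebraically. The bound `φ_v(r) ≤ (v+v²) min(|r|, r²)`
makes everything integrable, and it forces `Π(-∞, t) < ∞` for `t < 0`, so that `Π` is σ-finite on
`(-∞, 0)` as Tonelli requires.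
-/

open MeasureTheory Real Set
open scoped ENNReal

lemma exp_le_one_add_add_sq_div_two {x : ℝ} (hx : x ≤ 0) : exp x ≤ 1 + x + x ^ 2 / 2 := by
  have hmono : Monotone fun y : ℝ => exp y - 1 - y - y ^ 2 / 2 := by
    refine monotone_of_deriv_nonneg (by fun_prop) fun y => ?_
    have hd : HasDerivAt (fun y : ℝ => exp y - 1 - y - y ^ 2 / 2) (exp y - 1 - y) y := by
      refine ((((hasDerivAt_exp y).sub_const 1).sub (hasDerivAt_id y)).sub
        ((hasDerivAt_pow 2 y).div_const 2)).congr_deriv ?_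
      push_cast
      ring
    rw [hd.deriv]
    linarith [add_one_le_exp y]
  have := hmono hx
  norm_num at this
  linarith

lemma exp_mul_sub_one_sub_nonneg (v r : ℝ) : 0 ≤ exp (v * r) - 1 - v * r := by
  linarith [add_one_le_exp (v * r)]

lemma exp_mul_sub_one_sub_le {v r : ℝ} (hv : 0 ≤ v) (hr : r ≤ 0) :
    exp (v * r) - 1 - v * r ≤ (v + v ^ 2) * min |r| (r ^ 2) := by
  have hvr : v * r ≤ 0 := mul_nonpos_of_nonneg_of_nonpos hv hr
  have h_lin : exp (v * r) ≤ 1 := exp_le_one_iff.mpr hvr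
  have h_quad := exp_le_one_add_add_sq_div_two hvr
  rcases le_total |r| (r ^ 2) with h | h
  · rw [min_eq_left h, abs_of_nonpos hr]
    nlinarith
  · rw [min_eq_right h]
    nlinarith [sq_nonneg r]

lemma measure_Iio_ne_top_of_integrableOn {μ : Measure ℝ}
    (hμ : IntegrableOn (fun r => min |r| (r ^ 2)) (Iio 0) μ) {t : ℝ} (ht : t < 0) :
    μ (Iio t) ≠ ⊤ := by
  have hc : 0 < min |t| (t ^ 2) := lt_min (abs_pos.mpr ht.ne) (by nlinarith)
  have hconst : IntegrableOn (fun _ => min |t| (t ^ 2)) (Iio t) μ := by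
    refine (hμ.mono_set (Iio_subset_Iio ht.le)).mono' aestronglyMeasurable_const ?_
    filter_upwards [ae_restrict_mem measurableSet_Iio] with r (hr : r < t)
    rw [norm_of_nonneg hc.le]
    have hr0 := hr.trans ht
    refine min_le_min ?_ ?_
    · rw [abs_of_neg ht, abs_of_neg hr0]; linarith
    · nlinarith
  rw [integrableOn_const_iff] at hconst
  simpa [hc.ne', lt_top_iff_ne_top] using hconst

lemma sigmaFinite_restrict_Iio {μ : Measure ℝ} {a : ℝ} (hμ : ∀ r < a, μ (Iio r) ≠ ⊤) :
    SigmaFinite (μ.restrict (Iio a)) := by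
  obtain ⟨u, hu_mono, hu_mem, hu_lim⟩ := exists_seq_strictMono_tendsto' (x := a) (sub_one_lt a)
  have hu_lt : ∀ n, u n < a := fun n => (hu_mem n).2
  refine Measure.sigmaFinite_of_countable (S := insert (Ici a) (range fun n => Iic (u n)))
    ((countable_range _).insert _) ?_ ?_
  · rintro s (rfl | ⟨n, rfl⟩)
    · simp [Measure.restrict_apply measurableSet_Ici, Ici_inter_Iio]
    · calc μ.restrict (Iio a) (Iic (u n)) ≤ μ (Iio (u (n + 1))) :=
            Measure.restrict_apply_le _ _ |>.trans
              (measure_mono (Iic_subset_Iio.mpr (hu_mono n.lt_succ_self)))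
        _ < ⊤ := (hμ _ (hu_lt _)).lt_top
  · rw [sUnion_insert, sUnion_range, iUnion_Iic_eq_Iio_of_lt_of_tendsto hu_lt hu_lim,
      Ici_union_Iio]

lemma integrableOn_exp_mul_sub_one_sub {μ : Measure ℝ}
    (hμ : IntegrableOn (fun r => min |r| (r ^ 2)) (Iio 0) μ) {v : ℝ} (hv : 0 ≤ v) :
    IntegrableOn (fun r => exp (v * r) - 1 - v * r) (Iio 0) μ := by
  refine (hμ.const_mul (v + v ^ 2)).mono' (by fun_prop) ?_
  filter_upwards [ae_restrict_mem measurableSet_Iio] with r (hr : r < 0)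
  rw [norm_of_nonneg (exp_mul_sub_one_sub_nonneg v r)]
  exact exp_mul_sub_one_sub_le hv hr.le

lemma integrableOn_exp_mul_sub_one_sub_mul_exp {μ : Measure ℝ}
    (hμ : IntegrableOn (fun r => min |r| (r ^ 2)) (Iio 0) μ) {v : ℝ} (hv : 0 ≤ v) :
    IntegrableOn (fun r => (exp (v * r) - 1 - v * r) * exp r) (Iio 0) μ := by
  refine (integrableOn_exp_mul_sub_one_sub hμ hv).mono' (by fun_prop) ?_
  filter_upwards [ae_restrict_mem measurableSet_Iio] with r (hr : r < 0)
  rw [norm_of_nonneg (mul_nonneg (exp_mul_sub_one_sub_nonneg v r) (exp_nonneg r))]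
  exact mul_le_of_le_one_right (exp_mul_sub_one_sub_nonneg v r) (exp_le_one_iff.mpr hr.le)

lemma lintegral_mul_measure_Iio {μ : Measure ℝ} [SFinite μ] (a : ℝ) {h : ℝ → ℝ≥0∞}
    (hh : Measurable h) :
    ∫⁻ r in Iio a, h r * μ (Iio r) = ∫⁻ s, (∫⁻ r in Ioo s a, h r) ∂μ := by
  have hF : Measurable (Function.uncurry fun r s : ℝ => (Ioi s).indicator h r) := by
    have : (Function.uncurry fun r s : ℝ => (Ioi s).indicator h r) =
        {p : ℝ × ℝ | p.2 < p.1}.indicator (h ∘ Prod.fst) := by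
      ext ⟨r, s⟩
      simp [indicator_apply]
    rw [this]
    exact (hh.comp measurable_fst).indicator (measurableSet_lt measurable_snd measurable_fst)
  calc ∫⁻ r in Iio a, h r * μ (Iio r)
      = ∫⁻ r in Iio a, ∫⁻ s, (Ioi s).indicator h r ∂μ := by
        refine lintegral_congr fun r => ?_
        rw [← lintegral_indicator_const measurableSet_Iio]
        simp only [indicator_apply, mem_Iio, mem_Ioi]
    _ = ∫⁻ s, (∫⁻ r in Iio a, (Ioi s).indicator h r) ∂μ :=
        lintegral_lintegral_swap hF.aemeasurable
    _ = ∫⁻ s, (∫⁻ r in Ioo s a, h r) ∂μ := by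
        refine lintegral_congr fun s => ?_
        rw [lintegral_indicator measurableSet_Ioi, Measure.restrict_restrict measurableSet_Ioi,
          Ioi_inter_Iio]

lemma setIntegral_mul_toReal_measure_Iio {μ : Measure ℝ} {a : ℝ} (hμ : ∀ r < a, μ (Iio r) ≠ ⊤)
    {h : ℝ → ℝ} (hh : Continuous h) (h_nonneg : 0 ≤ h) :
    ∫ r in Iio a, h r * (μ (Iio r)).toReal = ∫ s in Iio a, (∫ r in s..a, h r) ∂μ := by
  have := sigmaFinite_restrict_Iio hμ
  have hμ_meas : Measurable fun r => μ (Iio r) :=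
    Monotone.measurable fun _ _ hrs => measure_mono (Iio_subset_Iio hrs)
  have hH : Continuous fun s => ∫ r in s..a, h r :=
    (intervalIntegral.continuous_primitive (fun _ _ => hh.intervalIntegrable _ _) a).neg.congr
      fun s => (intervalIntegral.integral_symm a s).symm
  rw [integral_eq_lintegral_of_nonneg_ae
      (ae_of_all _ fun r => mul_nonneg (h_nonneg r) ENNReal.toReal_nonneg)
      (hh.measurable.mul hμ_meas.ennreal_toReal).aestronglyMeasurable,
    integral_eq_lintegral_of_nonneg_ae
      (ae_restrict_of_forall_mem measurableSet_Iio fun s hs =>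
        intervalIntegral.integral_nonneg (le_of_lt hs) fun r _ => h_nonneg r)
      hH.aestronglyMeasurable]
  congr 1
  calc ∫⁻ r in Iio a, ENNReal.ofReal (h r * (μ (Iio r)).toReal)
      = ∫⁻ r in Iio a, ENNReal.ofReal (h r) * μ.restrict (Iio a) (Iio r) :=
        setLIntegral_congr_fun measurableSet_Iio fun r (hr : r < a) => by
          rw [ENNReal.ofReal_mul (h_nonneg r), ENNReal.ofReal_toReal (hμ r hr),
            Measure.restrict_apply measurableSet_Iio, inter_eq_left.mpr (Iio_subset_Iio hr.le)]
    _ = ∫⁻ s in Iio a, (∫⁻ r in Ioo s a, ENNReal.ofReal (h r)) ∂μ :=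
        lintegral_mul_measure_Iio a (ENNReal.measurable_ofReal.comp hh.measurable)
    _ = ∫⁻ s in Iio a, ENNReal.ofReal (∫ r in s..a, h r) ∂μ :=
        setLIntegral_congr_fun measurableSet_Iio fun s (hs : s < a) => by
          rw [intervalIntegral.integral_of_le hs.le, integral_Ioc_eq_integral_Ioo,
            ofReal_integral_eq_lintegral_ofReal (hh.integrableOn_Icc.mono_set Ioo_subset_Icc_self)
              (ae_of_all _ fun r => h_nonneg r)]

lemma mul_intervalIntegral_exp_mul_sub_one_sub_mul_exp (u s : ℝ) :
    (u + 1) * ∫ r in s..0, (exp (u * r) - 1 - u * r) * exp r =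
      u * (exp ((u + 1) * s) - 1 - (u + 1) * s) - u * (u + 1) * (exp (1 * s) - 1 - 1 * s)
        - (u + 1) * ((exp (u * s) - 1 - u * s) * exp s) := by
  have hG : ∀ x, HasDerivAt
      (fun y => exp ((u + 1) * y) - (u + 1) * exp y - u * (u + 1) * (y - 1) * exp y)
      ((u + 1) * ((exp (u * x) - 1 - u * x) * exp x)) x := by
    intro x
    have h1 := ((hasDerivAt_id' x).const_mul (u + 1)).exp
    have h2 := (hasDerivAt_exp x).const_mul (u + 1)
    have h3 := (((hasDerivAt_id' x).sub_const 1).const_mul (u * (u + 1))).mul (hasDerivAt_exp x)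
    refine ((h1.sub h2).sub h3).congr_deriv ?_
    simp only [add_mul, one_mul, exp_add]
    ring
  rw [← intervalIntegral.integral_const_mul,
    intervalIntegral.integral_eq_sub_of_hasDerivAt (fun x _ => hG x)
    ((by fun_prop : Continuous _).intervalIntegrable _ _)]
  simp only [mul_zero, exp_zero, add_mul, exp_add, one_mul]
  ring

lemma mul_setIntegral_exp_mul_sub_one_sub_mul_exp_mul_measure_Iio {μ : Measure ℝ}
    (hμ : IntegrableOn (fun r => min |r| (r ^ 2)) (Iio 0) μ) {u : ℝ} (hu : 0 ≤ u) :
    (u + 1) * ∫ r in Iio (0:ℝ), (exp (u * r) - 1 - u * r) * exp r * (μ (Iio r)).toReal =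
      u * (∫ r in Iio (0:ℝ), (exp ((u + 1) * r) - 1 - (u + 1) * r) ∂μ)
        - u * (u + 1) * (∫ r in Iio (0:ℝ), (exp (1 * r) - 1 - 1 * r) ∂μ)
        - (u + 1) * ∫ r in Iio (0:ℝ), (exp (u * r) - 1 - u * r) * exp r ∂μ := by
  have h_int_succ := integrableOn_exp_mul_sub_one_sub hμ (by linarith : 0 ≤ u + 1)
  have h_int_one := integrableOn_exp_mul_sub_one_sub hμ zero_le_one
  have h_int_exp := integrableOn_exp_mul_sub_one_sub_mul_exp hμ hu
  rw [setIntegral_mul_toReal_measure_Iio (fun r hr => measure_Iio_ne_top_of_integrableOn hμ hr)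
      (by fun_prop : Continuous fun r => (exp (u * r) - 1 - u * r) * exp r)
      fun r => mul_nonneg (exp_mul_sub_one_sub_nonneg u r) (exp_nonneg r),
    ← integral_const_mul]
  simp_rw [mul_intervalIntegral_exp_mul_sub_one_sub_mul_exp]
  have h_int_diff : IntegrableOn (fun r => u * (exp ((u + 1) * r) - 1 - (u + 1) * r)
      - u * (u + 1) * (exp (1 * r) - 1 - 1 * r)) (Iio 0) μ :=
    (h_int_succ.const_mul _).sub (h_int_one.const_mul _)
  rw [integral_sub h_int_diff (h_int_exp.const_mul _),
    integral_sub (h_int_succ.const_mul _) (h_int_one.const_mul _),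
    integral_const_mul, integral_const_mul, integral_const_mul]

theorem stmt3_general (σ m : ℝ) (Pi : Measure ℝ)
    (hPi_int : ∫⁻ r in Iio (0:ℝ), ENNReal.ofReal (min (|r|) (r ^ 2)) ∂Pi ≠ ⊤)
    (ψ : ℝ → ℝ) (f : ℝ → ℝ) (hf : ∀ r < (0:ℝ), f r = (Pi (Iio r)).toReal)
    (hψ : ∀ u : ℝ, ψ u = σ * u ^ 2 + m * u + ∫ r in Iio (0:ℝ), (exp (u * r) - 1 - u * r) ∂Pi) :
    ∀ u : ℝ, 0 ≤ u →
      u / (u + 1) * ψ (u + 1) =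
        σ * u ^ 2 + ψ 1 * u +
          ((∫ r in Iio (0:ℝ), (exp (u * r) - 1 - u * r) * exp r * f r) +
            ∫ r in Iio (0:ℝ), (exp (u * r) - 1 - u * r) * exp r ∂Pi) := by
  intro u hu
  have hPi : IntegrableOn (fun r => min |r| (r ^ 2)) (Iio 0) Pi :=
    ⟨(continuous_abs.min (continuous_pow 2)).aestronglyMeasurable,
      (hasFiniteIntegral_iff_ofReal (ae_of_all _ fun r => by positivity)).mpr hPi_int.lt_top⟩
  have h_tail : ∫ r in Iio (0:ℝ), (exp (u * r) - 1 - u * r) * exp r * f r =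
      ∫ r in Iio (0:ℝ), (exp (u * r) - 1 - u * r) * exp r * (Pi (Iio r)).toReal :=
    setIntegral_congr_fun measurableSet_Iio fun r hr => by rw [hf r hr]
  have key := mul_setIntegral_exp_mul_sub_one_sub_mul_exp_mul_measure_Iio hPi hu
  rw [← h_tail] at key
  rw [hψ, hψ, div_mul_eq_mul_div, div_eq_iff (by positivity)]
  linear_combination -key

/-- Lévy–Khintchine decomposition of `ψ₂(u) = (u/(u+1)) ψ(u+1)` for a spectrally negative
Lévy exponent `ψ(u) = σu² + mu + ∫_{-∞}^0 (e^{ur} - 1 - ur) Pi(dr)`, where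
`f(r) = Pi((-∞,r))` is the tail of the Lévy measure. -/
theorem stmt3 (σ m : ℝ) (hσ : 0 ≤ σ) (hm : 0 ≤ m) (Pi : Measure ℝ)
    (hPi_supp : Pi (Ici (0:ℝ)) = 0)
    (hPi_int : ∫⁻ r in Iio (0:ℝ), ENNReal.ofReal (min (|r|) (r ^ 2)) ∂Pi ≠ ⊤)
    (ψ : ℝ → ℝ) (f : ℝ → ℝ) (hf : ∀ r < (0:ℝ), f r = (Pi (Iio r)).toReal)
    (hψ : ∀ u : ℝ, ψ u = σ * u ^ 2 + m * u + ∫ r in Iio (0:ℝ), (exp (u * r) - 1 - u * r) ∂Pi) :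
    ∀ u : ℝ, 0 ≤ u →
      u / (u + 1) * ψ (u + 1) =
        σ * u ^ 2 + ψ 1 * u +
          ((∫ r in Iio (0:ℝ), (exp (u * r) - 1 - u * r) * exp r * f r) +
            ∫ r in Iio (0:ℝ), (exp (u * r) - 1 - u * r) * exp r ∂Pi) :=
  stmt3_general σ m Pi hPi_int ψ f hf hψ
end

section
/- Let α ∈ (0,1). The function r ↦ e^{-r/α} / (Γ(1-α)(1 - e^{-r/α})^{α+1}) is strictly decreasing on (0,∞) and integrable against min(1, r) dr. -/
open MeasureTheory Real Set

/-- For `α ∈ (0,1)`, the function `r ↦ e^{-r/α} / (Γ(1-α)(1 - e^{-r/α})^{α+1})` is strictly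
decreasing on `(0,∞)` and integrable against `min(1,r) dr`. -/
theorem stmt7 (α : ℝ) (hα : α ∈ Ioo (0:ℝ) 1)
    (f : ℝ → ℝ)
    (hf : ∀ r : ℝ, f r = exp (-r / α) / (Real.Gamma (1 - α) * (1 - exp (-r / α)) ^ (α + 1))) :
    StrictAntiOn f (Ioi 0) ∧ IntegrableOn (fun r => min 1 r * f r) (Ioi 0) := by
  obtain ⟨hα0, hα1⟩ := hα
  have hΓ : 0 < Real.Gamma (1 - α) := Real.Gamma_pos_of_pos (by linarith)
  have ht_lt : ∀ r : ℝ, 0 < r → exp (-r / α) < 1 := fun r hr => by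
    rw [exp_lt_one_iff]
    exact div_neg_of_neg_of_pos (by linarith) hα0
  have ht_pos : ∀ r : ℝ, (0:ℝ) < exp (-r / α) := fun r => exp_pos _
  -- nonnegativity of f
  have hf_nonneg : ∀ r : ℝ, 0 < r → 0 ≤ f r := fun r hr => by
    rw [hf r]
    have h1 := ht_lt r hr
    apply div_nonneg (exp_pos _).le
    exact mul_nonneg hΓ.le (Real.rpow_nonneg (by linarith) _)
  constructor
  · intro r1 h1 r2 h2 h12
    rw [hf r1, hf r2]
    have h1' : (0:ℝ) < r1 := h1
    set t1 := exp (-r1 / α) with ht1def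
    set t2 := exp (-r2 / α) with ht2def
    have ht1 : t1 < 1 := ht_lt r1 h1'
    have ht21 : t2 < t1 := by
      apply exp_lt_exp.2
      exact (div_lt_div_iff_of_pos_right hα0).2 (by linarith)
    have ht2pos : 0 < t2 := exp_pos _
    have hD1pos : 0 < (1 - t1) ^ (α + 1) := rpow_pos_of_pos (by linarith) _
    have hD2pos : 0 < (1 - t2) ^ (α + 1) := rpow_pos_of_pos (by linarith) _
    have hD : (1 - t1) ^ (α + 1) < (1 - t2) ^ (α + 1) :=
      rpow_lt_rpow (by linarith) (by linarith) (by linarith)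
    rw [div_lt_div_iff₀ (by positivity) (by positivity)]
    have s1 : t2 * (Real.Gamma (1 - α) * (1 - t1) ^ (α + 1)) <
        t2 * (Real.Gamma (1 - α) * (1 - t2) ^ (α + 1)) :=
      mul_lt_mul_of_pos_left (mul_lt_mul_of_pos_left hD hΓ) ht2pos
    have s2 : t2 * (Real.Gamma (1 - α) * (1 - t2) ^ (α + 1)) <
        t1 * (Real.Gamma (1 - α) * (1 - t2) ^ (α + 1)) :=
      mul_lt_mul_of_pos_right ht21 (mul_pos hΓ hD2pos)
    linarith
  · have hmeas : Measurable f := by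
      have : f = fun r => exp (-r / α) / (Real.Gamma (1 - α) * (1 - exp (-r / α)) ^ (α + 1)) :=
        funext hf
      rw [this]
      fun_prop
    have hmeas' : Measurable fun r : ℝ => min 1 r * f r := by fun_prop
    have key : Ioi (0:ℝ) = Ioc 0 1 ∪ Ioi 1 := (Ioc_union_Ioi_eq_Ioi (by norm_num)).symm
    rw [key, integrableOn_union]
    constructor
    · -- near zero : bound by K * r ^ (-α)
      set c : ℝ := exp (-(1/α)) / α with hc
      have hcpos : 0 < c := by positivity
      set K : ℝ := 1 / (Real.Gamma (1 - α) * c ^ (α + 1)) with hK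
      have hKpos : 0 < K := by positivity
      have hint : IntegrableOn (fun r : ℝ => K * r ^ (-α)) (Ioc (0:ℝ) 1) := by
        rw [integrableOn_Ioc_iff_integrableOn_Ioo]
        exact ((intervalIntegral.integrableOn_Ioo_rpow_iff one_pos).2 (by linarith)).const_mul K
      refine hint.integrable.mono' (hmeas'.aestronglyMeasurable) ?_
      rw [ae_restrict_iff' measurableSet_Ioc]
      refine ae_of_all _ fun r hr => ?_
      obtain ⟨hr0, hr1⟩ := hr
      have hmin : min 1 r = r := min_eq_right hr1
      set t := exp (-r / α) with htdef
      have htlt : t < 1 := ht_lt r hr0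
      have htpos : 0 < t := exp_pos _
      -- 1 - t ≥ c * r
      have hcr : c * r ≤ 1 - t := by
        have hx : r / α ≤ 1 / α := by gcongr
        have h1 : exp (-(1/α)) ≤ exp (-(r/α)) := exp_le_exp.2 (by linarith)
        have h2 : r / α * exp (-(r / α)) ≤ 1 - exp (-(r/α)) := by
          have ha := add_one_le_exp (r / α)
          have hmul : exp (-(r/α)) * exp (r/α) = 1 := by
            rw [← exp_add]; simp
          nlinarith [mul_le_mul_of_nonneg_left ha (exp_pos (-(r/α))).le]
        have heq : exp (-(r/α)) = t := by rw [htdef, neg_div]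
        calc c * r = r / α * exp (-(1/α)) := by rw [hc]; ring
          _ ≤ r / α * exp (-(r/α)) := by
              apply mul_le_mul_of_nonneg_left h1 (by positivity)
          _ ≤ 1 - exp (-(r/α)) := h2
          _ = 1 - t := by rw [heq]
      have hDge : (c * r) ^ (α + 1) ≤ (1 - t) ^ (α + 1) :=
        rpow_le_rpow (by positivity) hcr (by linarith)
      have hDsplit : (c * r) ^ (α + 1) = c ^ (α + 1) * r ^ (α + 1) :=
        mul_rpow hcpos.le hr0.le
      have hDpos : 0 < (1 - t) ^ (α + 1) := rpow_pos_of_pos (by linarith) _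
      have hrpow : r ^ (-α) * r ^ (α + 1) = r := by
        rw [← rpow_add hr0]
        norm_num
      rw [Real.norm_eq_abs, abs_of_nonneg
        (mul_nonneg (le_min zero_le_one hr0.le) (hf_nonneg r hr0)), hmin, hf r, ← htdef]
      rw [mul_div_assoc', div_le_iff₀ (by positivity)]
      have h3 : K * r ^ (-α) * (Real.Gamma (1 - α) * (1 - t) ^ (α + 1)) ≥
          K * r ^ (-α) * (Real.Gamma (1 - α) * (c ^ (α + 1) * r ^ (α + 1))) := by
        have hle : c ^ (α + 1) * r ^ (α + 1) ≤ (1 - t) ^ (α + 1) := hDsplit ▸ hDge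
        have hnn : (0:ℝ) ≤ K * r ^ (-α) * Real.Gamma (1 - α) := by positivity
        nlinarith [mul_le_mul_of_nonneg_left hle hnn]
      have hKc : K * (Real.Gamma (1 - α) * c ^ (α + 1)) = 1 := by
        rw [hK]; field_simp
      have h4 : K * r ^ (-α) * (Real.Gamma (1 - α) * (c ^ (α + 1) * r ^ (α + 1))) = r := by
        calc K * r ^ (-α) * (Real.Gamma (1 - α) * (c ^ (α + 1) * r ^ (α + 1)))
            = (r ^ (-α) * r ^ (α + 1)) * (K * (Real.Gamma (1 - α) * c ^ (α + 1))) := by ring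
          _ = r * 1 := by rw [hrpow, hKc]
          _ = r := mul_one r
      have h5 : r * t ≤ r := by nlinarith
      linarith
    · -- tail : bound by K' * exp (-(1/α) * r)
      set D0 : ℝ := (1 - exp (-(1:ℝ)/α)) ^ (α + 1) with hD0
      have he1 : exp (-(1:ℝ)/α) < 1 := ht_lt 1 one_pos
      have hD0pos : 0 < D0 := rpow_pos_of_pos (by linarith) _
      set K' : ℝ := 1 / (Real.Gamma (1 - α) * D0) with hK'
      have hint : IntegrableOn (fun r : ℝ => K' * exp (-(1/α) * r)) (Ioi (1:ℝ)) :=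
        (exp_neg_integrableOn_Ioi 1 (by positivity)).const_mul K'
      refine hint.integrable.mono' (hmeas'.aestronglyMeasurable) ?_
      rw [ae_restrict_iff' measurableSet_Ioi]
      refine ae_of_all _ fun r hr => ?_
      have hr1 : (1:ℝ) < r := hr
      have hmin : min 1 r = 1 := min_eq_left hr1.le
      set t := exp (-r / α) with htdef
      have htpos : 0 < t := exp_pos _
      have htle : t ≤ exp (-(1:ℝ)/α) := exp_le_exp.2 ((div_le_div_iff_of_pos_right hα0).2 (by linarith))
      have hDge : D0 ≤ (1 - t) ^ (α + 1) :=
        rpow_le_rpow (by linarith) (by linarith) (by linarith)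
      have hDpos : 0 < (1 - t) ^ (α + 1) := rpow_pos_of_pos (by linarith) _
      have hexp : t = exp (-(1/α) * r) := by
        rw [htdef]; congr 1; ring
      rw [Real.norm_eq_abs, abs_of_nonneg
        (mul_nonneg (le_min zero_le_one (by linarith)) (hf_nonneg r (by linarith))),
        hmin, one_mul, hf r, ← htdef, ← hexp, hK']
      rw [div_le_iff₀ (by positivity)]
      have : 1 / (Real.Gamma (1 - α) * D0) * t * (Real.Gamma (1 - α) * (1 - t) ^ (α + 1)) =
          t * ((1 - t) ^ (α + 1) / D0) := by
        field_simp
      rw [this]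
      nlinarith [(one_le_div hD0pos).2 hDge]
end
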